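/- For every k > 0 with k_p = c_p k > 1, the elastic correlation data admits the lower bound M_EL(k) ≥ (|β_d|² c_p^{d+2−m}/d) k^{d−3−m} ‖Tr σ‖_{L¹(B₁)} − C₂ |β_d|² c_p^{d+1−m} k^{d−4−m}, where Tr σ denotes the pointwise trace of the matrix σ and ‖Tr σ‖_{L¹(B₁)} = ∫_{B₁} Tr σ(z) dz. -/

import Mathlib

open MeasureTheory

noncomputable section

/-- `ℝ^d` with the Euclidean structure. -/
abbrev EdE (d : ℕ) := EuclideanSpace ℝ (Fin d)

/-- `|β_d|² = 1/(8π)` for `d = 2` and `1/(16π²)` otherwise (`d = 3`). -/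
def betaSq (d : ℕ) : ℝ := if d = 2 then 1 / (8 * Real.pi) else 1 / (16 * Real.pi ^ 2)

/-- Frobenius norm of a `d×d` complex matrix. -/
def frobCd {d : ℕ} (A : Matrix (Fin d) (Fin d) ℂ) : ℝ :=
  Real.sqrt (∑ i, ∑ j, ‖A i j‖ ^ 2)

/-- The rank-one complex matrix `x ŷᵀ`, i.e. `(x yᵀ)_{ij} = x_i y_j`. -/
def outerC {d : ℕ} (x y : EdE d) : Matrix (Fin d) (Fin d) ℂ :=
  Matrix.of fun i j => (x i : ℂ) * (y j : ℂ)

/-- Entrywise Fourier transform `σ̂(γ) = ∫_{ℝ^d} σ(z) e^{−iγ·z} dz` of the matrix-valued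
strength. -/
def matHatD {d : ℕ} (σ : EdE d → Matrix (Fin d) (Fin d) ℝ) (γ : EdE d) :
    Matrix (Fin d) (Fin d) ℂ :=
  Matrix.of fun i j => ∫ z, (σ z i j : ℂ) * Complex.exp (-Complex.I * ((inner ℝ γ z : ℝ) : ℂ))

/-- Entrywise integral `∫_{B₁} r(z,ξ) e^{−iγ·z} dz` of the residual. -/
def rIntD {d : ℕ} (r : EdE d → EdE d → Matrix (Fin d) (Fin d) ℂ) (ξ γ : EdE d) :
    Matrix (Fin d) (Fin d) ℂ :=
  Matrix.of fun i j =>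
    ∫ z in Metric.ball (0 : EdE d) 1,
      r z ξ i j * Complex.exp (-Complex.I * ((inner ℝ γ z : ℝ) : ℂ))

/-- Correlation of the compressional far-field patterns of the stochastic elastic wave
equation. -/
def Fp (d : ℕ) (m cp : ℝ) (σ : EdE d → Matrix (Fin d) (Fin d) ℝ)
    (r : EdE d → EdE d → Matrix (Fin d) (Fin d) ℂ) (k : ℝ) (x y : EdE d) : ℝ :=
  betaSq d * frobCd
    (((cp ^ ((d : ℝ) + 2 - m) * k ^ ((d : ℝ) - 3 - m) : ℝ) : ℂ) •
        (outerC x x * matHatD σ ((cp * k) • (x + y)) * outerC y y) +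
      ((cp ^ ((d : ℝ) + 2) * k ^ ((d : ℝ) - 3) : ℝ) : ℂ) •
        (outerC x x * rIntD r (-((cp * k) • y)) ((cp * k) • (x + y)) * outerC y y))

/-- Correlation of the shear far-field patterns of the stochastic elastic wave
equation. -/
def Fs (d : ℕ) (m cs : ℝ) (σ : EdE d → Matrix (Fin d) (Fin d) ℝ)
    (r : EdE d → EdE d → Matrix (Fin d) (Fin d) ℂ) (k : ℝ) (x y : EdE d) : ℝ :=
  betaSq d * frobCd
    (((cs ^ ((d : ℝ) + 2 - m) * k ^ ((d : ℝ) - 3 - m) : ℝ) : ℂ) •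
        ((1 - outerC x x) * matHatD σ ((cs * k) • (x + y)) * (1 - outerC y y)) +
      ((cs ^ ((d : ℝ) + 2) * k ^ ((d : ℝ) - 3) : ℝ) : ℂ) •
        ((1 - outerC x x) * rIntD r (-((cs * k) • y)) ((cs * k) • (x + y)) * (1 - outerC y y)))

/-- `M_EL(k) = max{ sup_{x̂,ŷ} F_p(x̂,ŷ,k), sup_{x̂,ŷ} F_s(x̂,ŷ,k) }`. -/
def MEL (d : ℕ) (m cp cs : ℝ) (σ : EdE d → Matrix (Fin d) (Fin d) ℝ)
    (r : EdE d → EdE d → Matrix (Fin d) (Fin d) ℂ) (k : ℝ) : ℝ :=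
  max (sSup {v : ℝ | ∃ x y : EdE d, ‖x‖ = 1 ∧ ‖y‖ = 1 ∧ v = Fp d m cp σ r k x y})
    (sSup {v : ℝ | ∃ x y : EdE d, ‖x‖ = 1 ∧ ‖y‖ = 1 ∧ v = Fs d m cs σ r k x y})

end

/-!
Choose a coordinate direction `e = e_i` whose diagonal entry `∫ σ_ii` is at least the average
`(∫ Tr σ) / d`, and evaluate the compressional correlation at the backscattering pair
`x̂ = e`, `ŷ = -e`. Since `x̂ + ŷ = 0`, the Fourier transform of `σ` is taken at the origin,
so the `(i, i)` entry of the matrix inside `F_p` is a nonnegative multiple of `∫ σ_ii` plus a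
multiple of `∫_{B₁} r_ii(z, k_p e) dz`, which the decay of `r` at `|ξ| = k_p > 1` controls.
The Frobenius norm dominates that entry, and `F_p` is bounded on the sphere, so
`M_EL(k) ≥ F_p(e, -e)`.
-/

open Metric

section FrobeniusNorm

attribute [local instance] Matrix.frobeniusSeminormedAddCommGroup Matrix.frobeniusNormedSpace

variable {d : ℕ}

lemma frobCd_eq_norm (A : Matrix (Fin d) (Fin d) ℂ) : frobCd A = ‖A‖ := by
  rw [Matrix.frobenius_norm_def, frobCd, Real.sqrt_eq_rpow]
  simp only [Real.rpow_two]

lemma frobCd_smul_add_smul_le (a b : ℝ) (A B : Matrix (Fin d) (Fin d) ℂ) :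
    frobCd ((a : ℂ) • A + (b : ℂ) • B) ≤ |a| * frobCd A + |b| * frobCd B := by
  simp only [frobCd_eq_norm]
  refine (norm_add_le _ _).trans_eq ?_
  simp [norm_smul]

lemma frobCd_mul_mul_le (A B C : Matrix (Fin d) (Fin d) ℂ) :
    frobCd (A * B * C) ≤ frobCd A * frobCd B * frobCd C := by
  simp only [frobCd_eq_norm]
  exact (Matrix.frobenius_norm_mul _ _).trans
    (by gcongr; exact Matrix.frobenius_norm_mul _ _)

end FrobeniusNorm

variable {d : ℕ}

lemma frobCd_outerC (x y : EdE d) : frobCd (outerC x y) = ‖x‖ * ‖y‖ := by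
  rw [frobCd, EuclideanSpace.norm_eq, EuclideanSpace.norm_eq,
    ← Real.sqrt_mul (by positivity), Finset.sum_mul_sum]
  simp [outerC, mul_pow]

lemma norm_apply_le_frobCd (A : Matrix (Fin d) (Fin d) ℂ) (i j : Fin d) :
    ‖A i j‖ ≤ frobCd A := by
  refine Real.le_sqrt_of_sq_le ?_
  calc ‖A i j‖ ^ 2 ≤ ∑ j', ‖A i j'‖ ^ 2 :=
        Finset.single_le_sum (f := fun j' => ‖A i j'‖ ^ 2) (fun _ _ => by positivity)
          (Finset.mem_univ j)
    _ ≤ ∑ i', ∑ j', ‖A i' j'‖ ^ 2 :=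
        Finset.single_le_sum (f := fun i' => ∑ j', ‖A i' j'‖ ^ 2) (fun _ _ => by positivity)
          (Finset.mem_univ i)

lemma frobCd_le_sum_norm_apply (A : Matrix (Fin d) (Fin d) ℂ) :
    frobCd A ≤ ∑ i, ∑ j, ‖A i j‖ := by
  rw [frobCd, ← Finset.sum_product', ← Finset.sum_product']
  exact Real.sqrt_le_iff.mpr ⟨by positivity,
    Finset.sum_sq_le_sq_sum_of_nonneg fun _ _ => norm_nonneg _⟩

lemma frobCd_nonneg (A : Matrix (Fin d) (Fin d) ℂ) : 0 ≤ frobCd A := Real.sqrt_nonneg _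

lemma integrable_frobCd {α : Type*} [MeasurableSpace α] {μ : MeasureTheory.Measure α}
    {f : α → Matrix (Fin d) (Fin d) ℂ} (hf : ∀ i j, Integrable (fun z => f z i j) μ) :
    Integrable (fun z => frobCd (f z)) μ := by
  refine Integrable.mono' (g := fun z => ∑ i, ∑ j, ‖f z i j‖)
    (integrable_finsetSum _ fun i _ => integrable_finsetSum _ fun j _ => (hf i j).norm)
    ?_ (.of_forall fun z => ?_)
  · exact Real.continuous_sqrt.comp_aestronglyMeasurable
      (Finset.aestronglyMeasurable_fun_sum _ fun i _ => Finset.aestronglyMeasurable_fun_sum _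
        fun j _ => (hf i j).aestronglyMeasurable.norm.pow 2)
  · rw [Real.norm_of_nonneg (frobCd_nonneg _)]
    exact frobCd_le_sum_norm_apply _

lemma norm_exp_neg_I_mul_ofReal (t : ℝ) : ‖Complex.exp (-Complex.I * (t : ℂ))‖ = 1 := by
  simpa using Complex.norm_exp_I_mul_ofReal (-t)

lemma norm_matHatD_apply_le (σ : EdE d → Matrix (Fin d) (Fin d) ℝ) (γ : EdE d) (i j : Fin d) :
    ‖matHatD σ γ i j‖ ≤ ∫ z, |σ z i j| :=
  (norm_integral_le_integral_norm _).trans_eq <| by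
    simp only [norm_mul, norm_exp_neg_I_mul_ofReal, mul_one, Complex.norm_real, Real.norm_eq_abs]

lemma matHatD_zero_apply (σ : EdE d → Matrix (Fin d) (Fin d) ℝ) (i j : Fin d) :
    matHatD σ 0 i j = ((∫ z, σ z i j : ℝ) : ℂ) := by
  simp only [matHatD, Matrix.of_apply, inner_zero_left, Complex.ofReal_zero, mul_zero,
    Complex.exp_zero, mul_one]
  exact integral_ofReal

lemma norm_rIntD_apply_le (r : EdE d → EdE d → Matrix (Fin d) (Fin d) ℂ) {ξ : EdE d}
    (hr : ∀ i j, Integrable (fun z => r z ξ i j)) (γ : EdE d) (i j : Fin d) :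
    ‖rIntD r ξ γ i j‖ ≤ ∫ z in ball (0 : EdE d) 1, frobCd (r z ξ) :=
  norm_integral_le_of_norm_le (integrable_frobCd hr).integrableOn <| .of_forall fun z => by
    rw [norm_mul, norm_exp_neg_I_mul_ofReal, mul_one]
    exact norm_apply_le_frobCd _ i j

lemma frobCd_matHatD_le (σ : EdE d → Matrix (Fin d) (Fin d) ℝ) (γ : EdE d) :
    frobCd (matHatD σ γ) ≤ ∑ i, ∑ j, ∫ z, |σ z i j| :=
  (frobCd_le_sum_norm_apply _).trans <| by
    gcongr with i _ j _; exact norm_matHatD_apply_le σ γ i j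

lemma frobCd_rIntD_le (r : EdE d → EdE d → Matrix (Fin d) (Fin d) ℂ) {ξ : EdE d}
    (hr : ∀ i j, Integrable (fun z => r z ξ i j)) (γ : EdE d) :
    frobCd (rIntD r ξ γ) ≤ d ^ 2 * ∫ z in ball (0 : EdE d) 1, frobCd (r z ξ) :=
  calc frobCd (rIntD r ξ γ) ≤ ∑ i, ∑ j, ‖rIntD r ξ γ i j‖ := frobCd_le_sum_norm_apply _
    _ ≤ ∑ _i : Fin d, ∑ _j : Fin d, ∫ z in ball (0 : EdE d) 1, frobCd (r z ξ) := by
      gcongr with i _ j _; exact norm_rIntD_apply_le r hr γ i j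
    _ = d ^ 2 * ∫ z in ball (0 : EdE d) 1, frobCd (r z ξ) := by simp [sq, mul_assoc]

lemma betaSq_nonneg (d : ℕ) : 0 ≤ betaSq d := by
  unfold betaSq
  split_ifs <;> positivity

lemma outerC_neg_neg (x : EdE d) : outerC (-x) (-x) = outerC x x := by
  ext a b
  simp [outerC]

lemma outerC_single_mul_mul_outerC_single_apply (i : Fin d) (M : Matrix (Fin d) (Fin d) ℂ) :
    (outerC (EuclideanSpace.single i 1) (EuclideanSpace.single i 1) * M *
      outerC (EuclideanSpace.single i 1) (EuclideanSpace.single i 1)) i i = M i i := by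
  simp [outerC, Matrix.mul_apply, apply_ite Complex.ofReal, ite_mul, Finset.sum_ite_eq']

lemma bddAbove_Fp {m cp k C₂ : ℝ} (σ : EdE d → Matrix (Fin d) (Fin d) ℝ)
    (r : EdE d → EdE d → Matrix (Fin d) (Fin d) ℂ)
    (hr_int : ∀ ξ i j, Integrable (fun z => r z ξ i j))
    (hr_bd : ∀ ξ : EdE d, 1 < ‖ξ‖ →
      (∫ z in ball (0 : EdE d) 1, frobCd (r z ξ)) ≤ C₂ * ‖ξ‖ ^ (-(m + 1)))
    (hkp : 1 < cp * k) :
    BddAbove {v : ℝ | ∃ x y : EdE d, ‖x‖ = 1 ∧ ‖y‖ = 1 ∧ v = Fp d m cp σ r k x y} := by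
  refine ⟨betaSq d * (|cp ^ ((d : ℝ) + 2 - m) * k ^ ((d : ℝ) - 3 - m)| *
      (∑ i, ∑ j, ∫ z, |σ z i j|) +
    |cp ^ ((d : ℝ) + 2) * k ^ ((d : ℝ) - 3)| * (d ^ 2 * (C₂ * (cp * k) ^ (-(m + 1))))), ?_⟩
  rintro _ ⟨x, y, hx, hy, rfl⟩
  have hξ : ‖-((cp * k) • y)‖ = cp * k := by
    rw [norm_neg, norm_smul, hy, mul_one, Real.norm_of_nonneg (by linarith)]
  have hproj (A : Matrix (Fin d) (Fin d) ℂ) :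
      frobCd (outerC x x * A * outerC y y) ≤ frobCd A :=
    (frobCd_mul_mul_le _ _ _).trans_eq (by rw [frobCd_outerC, frobCd_outerC, hx, hy]; ring)
  have hr_decay := hr_bd _ (hξ ▸ hkp)
  rw [hξ] at hr_decay
  rw [Fp]
  refine mul_le_mul_of_nonneg_left ((frobCd_smul_add_smul_le _ _ _ _).trans ?_)
    (betaSq_nonneg d)
  gcongr
  · exact (hproj _).trans (frobCd_matHatD_le σ _)
  · exact (hproj _).trans <| (frobCd_rIntD_le r (hr_int _) _).trans (by gcongr)

lemma exists_setIntegral_trace_div_le {α : Type*} [MeasurableSpace α] {μ : Measure α}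
    {σ : α → Matrix (Fin d) (Fin d) ℝ} {s : Set α} (hd : d ≠ 0)
    (hσ_int : ∀ i, Integrable (fun z => σ z i i) μ) (hσ_supp : ∀ z ∉ s, σ z = 0) :
    ∃ i, (∫ z in s, (σ z).trace ∂μ) / d ≤ ∫ z, σ z i i ∂μ := by
  have htrace : ∫ z in s, (σ z).trace ∂μ = ∑ i, ∫ z, σ z i i ∂μ := by
    rw [setIntegral_eq_integral_of_forall_compl_eq_zero fun z hz => by simp [hσ_supp z hz]]
    exact integral_finsetSum _ fun i _ => hσ_int i
  have : NeZero d := ⟨hd⟩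
  obtain ⟨i, -, hi⟩ := Finset.exists_le_of_sum_le Finset.univ_nonempty
    (f := fun _ => (∫ z in s, (σ z).trace ∂μ) / d) (g := fun i => ∫ z, σ z i i ∂μ)
    (by simp [htrace, mul_div_cancel₀ _ (Nat.cast_ne_zero.mpr hd : (d : ℝ) ≠ 0)])
  exact ⟨i, hi⟩

lemma rpow_mul_rpow_mul_mul_rpow {c k : ℝ} (hc : 0 < c) (hk : 0 < k) (a b t : ℝ) :
    c ^ a * k ^ b * (c * k) ^ t = c ^ (a + t) * k ^ (b + t) := by
  rw [Real.mul_rpow hc.le hk.le, Real.rpow_add hc, Real.rpow_add hk]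
  ring

lemma sub_norm_le_norm_ofReal_add (a : ℝ) (w : ℂ) : a - ‖w‖ ≤ ‖(a : ℂ) + w‖ := by
  have := norm_le_add_norm_add (a : ℂ) w
  rw [Complex.norm_real, Real.norm_eq_abs] at this
  linarith [le_abs_self a]

lemma le_Fp_single_neg_single {m cp k : ℝ} (hcp : 0 ≤ cp) (hk : 0 ≤ k)
    (σ : EdE d → Matrix (Fin d) (Fin d) ℝ) (r : EdE d → EdE d → Matrix (Fin d) (Fin d) ℂ)
    (i : Fin d)
    (hr : ∀ a b, Integrable (fun z => r z ((cp * k) • EuclideanSpace.single i 1) a b)) :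
    betaSq d * (cp ^ ((d : ℝ) + 2 - m) * k ^ ((d : ℝ) - 3 - m) * (∫ z, σ z i i) -
        cp ^ ((d : ℝ) + 2) * k ^ ((d : ℝ) - 3) *
          ∫ z in ball (0 : EdE d) 1, frobCd (r z ((cp * k) • EuclideanSpace.single i 1))) ≤
      Fp d m cp σ r k (EuclideanSpace.single i 1) (-EuclideanSpace.single i 1) := by
  set s₁ := cp ^ ((d : ℝ) + 2 - m) * k ^ ((d : ℝ) - 3 - m)
  set s₂ := cp ^ ((d : ℝ) + 2) * k ^ ((d : ℝ) - 3)
  set R := rIntD r ((cp * k) • EuclideanSpace.single i 1) 0 i i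
  have hs₂ : 0 ≤ s₂ := by positivity
  have hR : ‖(s₂ : ℂ) * R‖ ≤ s₂ * ∫ z in ball (0 : EdE d) 1,
      frobCd (r z ((cp * k) • EuclideanSpace.single i 1)) := by
    rw [norm_mul, Complex.norm_real, Real.norm_of_nonneg hs₂]
    exact mul_le_mul_of_nonneg_left (norm_rIntD_apply_le r hr 0 i i) hs₂
  refine mul_le_mul_of_nonneg_left ?_ (betaSq_nonneg d)
  calc _ ≤ s₁ * (∫ z, σ z i i) - ‖(s₂ : ℂ) * R‖ := sub_le_sub_left hR _
    _ ≤ ‖((s₁ * ∫ z, σ z i i : ℝ) : ℂ) + (s₂ : ℂ) * R‖ := sub_norm_le_norm_ofReal_add _ _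
    _ ≤ _ := (le_of_eq ?_).trans (norm_apply_le_frobCd _ i i)
  simp [s₁, s₂, R, outerC_neg_neg, outerC_single_mul_mul_outerC_single_apply,
    matHatD_zero_apply]

theorem statement9_general (d : ℕ) (hd : d = 2 ∨ d = 3) (m C₂ : ℝ)
    (cp cs : ℝ)
    (σ : EdE d → Matrix (Fin d) (Fin d) ℝ)
    (hσ_int : ∀ i j, Integrable (fun z => σ z i j))
    (hσ_supp : ∀ z ∉ Metric.ball (0 : EdE d) 1, σ z = 0)
    (r : EdE d → EdE d → Matrix (Fin d) (Fin d) ℂ)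
    (hr_int : ∀ ξ i j, Integrable (fun z => r z ξ i j))
    (hr_bd : ∀ ξ : EdE d, 1 < ‖ξ‖ →
      (∫ z in Metric.ball (0 : EdE d) 1, frobCd (r z ξ)) ≤ C₂ * ‖ξ‖ ^ (-(m + 1)))
    (k : ℝ) (hk : 0 < k) (hkp : 1 < cp * k) :
    betaSq d * cp ^ ((d : ℝ) + 2 - m) / (d : ℝ) * k ^ ((d : ℝ) - 3 - m) *
        (∫ z in Metric.ball (0 : EdE d) 1, (σ z).trace) -
      C₂ * betaSq d * cp ^ ((d : ℝ) + 1 - m) * k ^ ((d : ℝ) - 4 - m) ≤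
      MEL d m cp cs σ r k := by
  have hcp : 0 < cp := pos_of_mul_pos_left (one_pos.trans hkp) hk.le
  obtain ⟨i, hi⟩ := exists_setIntegral_trace_div_le (by omega) (fun i => hσ_int i i) hσ_supp
  set e : EdE d := EuclideanSpace.single i 1
  have he : ‖e‖ = 1 := by simp [e]
  have hξ : ‖(cp * k) • e‖ = cp * k := by
    rw [norm_smul, he, mul_one, Real.norm_of_nonneg (by positivity)]
  have hdecay := hr_bd ((cp * k) • e) (by rwa [hξ])
  rw [hξ] at hdecay
  have hexp : cp ^ ((d : ℝ) + 2) * k ^ ((d : ℝ) - 3) * (cp * k) ^ (-(m + 1)) =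
      cp ^ ((d : ℝ) + 1 - m) * k ^ ((d : ℝ) - 4 - m) := by
    rw [rpow_mul_rpow_mul_mul_rpow hcp hk]; ring_nf
  have hβ := betaSq_nonneg d
  calc _ = betaSq d * (cp ^ ((d : ℝ) + 2 - m) * k ^ ((d : ℝ) - 3 - m) *
          ((∫ z in ball (0 : EdE d) 1, (σ z).trace) / d) -
        cp ^ ((d : ℝ) + 2) * k ^ ((d : ℝ) - 3) * (C₂ * (cp * k) ^ (-(m + 1)))) := by
        linear_combination C₂ * betaSq d * hexp
    _ ≤ betaSq d * (cp ^ ((d : ℝ) + 2 - m) * k ^ ((d : ℝ) - 3 - m) * (∫ z, σ z i i) -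
        cp ^ ((d : ℝ) + 2) * k ^ ((d : ℝ) - 3) *
          ∫ z in ball (0 : EdE d) 1, frobCd (r z ((cp * k) • e))) := by gcongr
    _ ≤ Fp d m cp σ r k e (-e) := le_Fp_single_neg_single hcp.le hk.le σ r i (hr_int _)
    _ ≤ MEL d m cp cs σ r k :=
      (le_csSup (bddAbove_Fp σ r hr_int hr_bd hkp) ⟨e, -e, he, by rwa [norm_neg], rfl⟩).trans
        (le_max_left _ _)

/-- For every `k > 0` with `k_p = c_p k > 1`, the elastic correlation
data admits the lower bound
`M_EL(k) ≥ (|β_d|² c_p^{d+2−m}/d) k^{d−3−m} ‖Tr σ‖_{L¹(B₁)} − C₂ |β_d|² c_p^{d+1−m} k^{d−4−m}`. -/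
theorem statement9 (d : ℕ) (hd : d = 2 ∨ d = 3) (m C₂ μ lam : ℝ)
    (hm : (d : ℝ) - 2 < m ∧ m ≤ (d : ℝ)) (hC₂ : 0 < C₂) (hμ : 0 < μ) (hlam : 0 < lam + μ)
    (cp cs : ℝ) (hcp : cp = (lam + 2 * μ) ^ (-(1 / 2 : ℝ))) (hcs : cs = μ ^ (-(1 / 2 : ℝ)))
    (σ : EdE d → Matrix (Fin d) (Fin d) ℝ)
    (hσ_int : ∀ i j, Integrable (fun z => σ z i j))
    (hσ_supp : ∀ z ∉ Metric.ball (0 : EdE d) 1, σ z = 0)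
    (hσ_psd : ∀ z, (σ z).IsSymm ∧ (σ z).PosSemidef)
    (r : EdE d → EdE d → Matrix (Fin d) (Fin d) ℂ)
    (hr_int : ∀ ξ i j, Integrable (fun z => r z ξ i j))
    (hr_supp : ∀ ξ : EdE d, ∀ z ∉ Metric.ball (0 : EdE d) 1, r z ξ = 0)
    (hr_bd : ∀ ξ : EdE d, 1 < ‖ξ‖ →
      (∫ z in Metric.ball (0 : EdE d) 1, frobCd (r z ξ)) ≤ C₂ * ‖ξ‖ ^ (-(m + 1)))
    (k : ℝ) (hk : 0 < k) (hkp : 1 < cp * k) :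
    betaSq d * cp ^ ((d : ℝ) + 2 - m) / (d : ℝ) * k ^ ((d : ℝ) - 3 - m) *
        (∫ z in Metric.ball (0 : EdE d) 1, (σ z).trace) -
      C₂ * betaSq d * cp ^ ((d : ℝ) + 1 - m) * k ^ ((d : ℝ) - 4 - m) ≤
      MEL d m cp cs σ r k :=
  statement9_general d hd m C₂ cp cs σ hσ_int hσ_supp r hr_int hr_bd k hk hkp
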